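/- arXiv:2105.11927 — 5 statements merged into one kernel-verified Lean document; each statement's English description precedes it below -/
import Mathlib

section
/- Let y ≥ 0 and τ ≥ 0 be real numbers with (1 + y)² < 4τ, and define f : [0, ∞) → ℝ by f(x) = (1/2)(x − y)² + τ·log(1 + x). Then f is strictly increasing on [0, ∞), and hence x = 0 is the unique global minimizer of f over [0, ∞). -/
/-!
On `(-1, ∞)` the derivative of `f` is `(x - y) + τ / (1 + x) = q(x) / (1 + x)` with
`q(x) = (x - y)(1 + x) + τ`, and `4 q(x) = (2x + 1 - y)² + (4τ - (1 + y)²)`. The hypothesis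
`(1 + y)² < 4τ` says exactly that the quadratic `q` has negative discriminant, so `f' > 0`.
-/

open Real Set

section LogShrinkage

variable {y τ : ℝ}

lemma sub_mul_one_add_add_pos (h : (1 + y) ^ 2 < 4 * τ) (x : ℝ) :
    0 < (x - y) * (1 + x) + τ := by
  nlinarith [sq_nonneg (2 * x + 1 - y)]

lemma hasDerivAt_logShrinkage {x : ℝ} (hx : 1 + x ≠ 0) :
    HasDerivAt (fun x => (1 / 2) * (x - y) ^ 2 + τ * log (1 + x)) ((x - y) + τ / (1 + x)) x := by
  have hsq : HasDerivAt (fun x : ℝ => (1 / 2) * (x - y) ^ 2) (x - y) x := by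
    simpa using (((hasDerivAt_id x).sub_const y).pow 2).const_mul (1 / 2 : ℝ)
  have hlog : HasDerivAt (fun x : ℝ => τ * log (1 + x)) (τ / (1 + x)) x := by
    simpa [div_eq_mul_inv] using (((hasDerivAt_id x).const_add 1).log hx).const_mul τ
  exact hsq.add hlog

lemma logShrinkage_deriv_pos (h : (1 + y) ^ 2 < 4 * τ) {x : ℝ} (hx : -1 < x) :
    0 < (x - y) + τ / (1 + x) := by
  have hx1 : 0 < 1 + x := by linarith
  calc (0 : ℝ) < ((x - y) * (1 + x) + τ) / (1 + x) :=
        div_pos (sub_mul_one_add_add_pos h x) hx1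
    _ = (x - y) + τ / (1 + x) := by field_simp

lemma strictMonoOn_logShrinkage (h : (1 + y) ^ 2 < 4 * τ) :
    StrictMonoOn (fun x => (1 / 2) * (x - y) ^ 2 + τ * log (1 + x)) (Ioi (-1)) := by
  have hderiv : ∀ x ∈ Ioi (-1 : ℝ), HasDerivAt
      (fun x => (1 / 2) * (x - y) ^ 2 + τ * log (1 + x)) ((x - y) + τ / (1 + x)) x :=
    fun x hx => hasDerivAt_logShrinkage (by linarith [mem_Ioi.mp hx])
  refine strictMonoOn_of_hasDerivWithinAt_pos (f' := fun x => (x - y) + τ / (1 + x))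
    (convex_Ioi _) (fun x hx => (hderiv x hx).continuousAt.continuousWithinAt) (fun x hx => ?_)
    (fun x hx => ?_)
  · rw [interior_Ioi] at hx ⊢
    exact (hderiv x hx).hasDerivWithinAt
  · rw [interior_Ioi] at hx
    exact logShrinkage_deriv_pos h hx

end LogShrinkage

theorem stmt1_general (y τ : ℝ) (h : (1 + y)^2 < 4 * τ)
    (f : ℝ → ℝ) (hf : ∀ x : ℝ, f x = (1/2) * (x - y)^2 + τ * Real.log (1 + x)) :
    StrictMonoOn f (Set.Ici (0 : ℝ)) ∧
    ∀ x : ℝ, 0 ≤ x → x ≠ 0 → f 0 < f x := by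
  obtain rfl : f = fun x => (1 / 2) * (x - y) ^ 2 + τ * log (1 + x) := funext hf
  have hmono : StrictMonoOn _ (Ici (0 : ℝ)) :=
    (strictMonoOn_logShrinkage h).mono fun x (hx : 0 ≤ x) => show -1 < x by linarith
  exact ⟨hmono, fun x hx hne => hmono self_mem_Ici hx (lt_of_le_of_ne hx (Ne.symm hne))⟩

/-- If `(1+y)² < 4τ`, the scalar objective `f(x) = (1/2)(x-y)^2 + τ log(1+x)` is strictly
increasing on `[0, ∞)`, hence `0` is its unique global minimizer there. -/
theorem stmt1 (y τ : ℝ) (hy : 0 ≤ y) (hτ : 0 ≤ τ) (h : (1 + y)^2 < 4 * τ)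
    (f : ℝ → ℝ) (hf : ∀ x : ℝ, f x = (1/2) * (x - y)^2 + τ * Real.log (1 + x)) :
    StrictMonoOn f (Set.Ici (0 : ℝ)) ∧
    ∀ x : ℝ, 0 ≤ x → x ≠ 0 → f 0 < f x :=
  stmt1_general y τ h f hf
end

section
/- Let y ≥ 0 and τ ≥ 0 be real numbers with (1 + y)² > 4τ, define f(x) = (1/2)(x − y)² + τ·log(1 + x) for x ≥ 0, and set ξ = (y − 1)/2 + √((1 + y)²/4 − τ). If ξ > 0 and f(ξ) ≤ f(0) = y²/2, then ξ is a global minimizer of f over [0, ∞); otherwise (i.e., if ξ ≤ 0 or f(ξ) > y²/2), 0 is a global minimizer of f over [0, ∞). -/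
/-!
The derivative of `f` is `(x - ξ)(x - η)/(1 + x)` with `η = (y - 1)/2 - √((1 + y)²/4 - τ) ≤ ξ`,
so on `[0, ∞)` the function increases up to `η`, decreases on `[η, ξ]` and increases from `ξ` on.
Its minimum over `[0, ∞)` is therefore attained at `0` or at `max 0 ξ`, and comparing `f ξ` with
`f 0 = y²/2` decides which.
-/

open Set

section DerivSign

variable {f f' : ℝ → ℝ} {a : ℝ}

lemma le_of_hasDerivAt_nonneg_on_Ioo (hf : ContinuousOn f (Ici a))
    (hd : ∀ x ∈ Ioi a, HasDerivAt f (f' x) x) {b c : ℝ} (hab : a ≤ b) (hbc : b ≤ c)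
    (hf' : ∀ x ∈ Ioo b c, 0 ≤ f' x) : f b ≤ f c := by
  refine monotoneOn_of_hasDerivWithinAt_nonneg (convex_Icc b c)
    (hf.mono (Icc_subset_Ici_self.trans (Ici_subset_Ici.2 hab))) (fun x hx => ?_)
    (by rwa [interior_Icc]) ⟨le_rfl, hbc⟩ ⟨hbc, le_rfl⟩ hbc
  rw [interior_Icc] at hx ⊢
  exact (hd x (hab.trans_lt hx.1)).hasDerivWithinAt

lemma le_of_hasDerivAt_nonpos_on_Ioo (hf : ContinuousOn f (Ici a))
    (hd : ∀ x ∈ Ioi a, HasDerivAt f (f' x) x) {b c : ℝ} (hab : a ≤ b) (hbc : b ≤ c)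
    (hf' : ∀ x ∈ Ioo b c, f' x ≤ 0) : f c ≤ f b := by
  refine antitoneOn_of_hasDerivWithinAt_nonpos (convex_Icc b c)
    (hf.mono (Icc_subset_Ici_self.trans (Ici_subset_Ici.2 hab))) (fun x hx => ?_)
    (by rwa [interior_Icc]) ⟨le_rfl, hbc⟩ ⟨hbc, le_rfl⟩ hbc
  rw [interior_Icc] at hx ⊢
  exact (hd x (hab.trans_lt hx.1)).hasDerivWithinAt

lemma min_le_of_hasDerivAt_nonneg_nonpos_nonneg (hf : ContinuousOn f (Ici a))
    (hd : ∀ x ∈ Ioi a, HasDerivAt f (f' x) x) {p q : ℝ}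
    (hinc : ∀ x ∈ Ioi a, x ≤ p ∨ q ≤ x → 0 ≤ f' x)
    (hdec : ∀ x ∈ Ioi a, p ≤ x → x ≤ q → f' x ≤ 0) {x : ℝ} (hx : a ≤ x) :
    min (f a) (f (max a q)) ≤ f x := by
  rcases le_total (max a q) x with hqx | hxq
  · refine min_le_of_right_le (le_of_hasDerivAt_nonneg_on_Ioo hf hd (le_max_left a q) hqx
      fun z hz => hinc z (hz.1.trans_le' (le_max_left a q)) (Or.inr ?_))
    exact (le_max_right a q).trans hz.1.le
  rcases le_total x p with hxp | hpx
  · exact min_le_of_left_le (le_of_hasDerivAt_nonneg_on_Ioo hf hd le_rfl hx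
      fun z hz => hinc z hz.1 (Or.inl (hz.2.le.trans hxp)))
  · refine min_le_of_right_le (le_of_hasDerivAt_nonpos_on_Ioo hf hd hx hxq fun z hz => ?_)
    have haz : a < z := hx.trans_lt hz.1
    exact hdec z haz (hpx.trans hz.1.le) ((lt_max_iff.1 hz.2).resolve_left haz.not_gt).le

end DerivSign

noncomputable def logShrinkObjective (y τ x : ℝ) : ℝ := (1/2) * (x - y)^2 + τ * Real.log (1 + x)

lemma hasDerivAt_logShrinkObjective (y τ : ℝ) {x : ℝ} (hx : 0 < 1 + x) :
    HasDerivAt (logShrinkObjective y τ) ((x - y) + τ / (1 + x)) x := by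
  have hsq : HasDerivAt (fun x => (x - y)^2) (2 * (x - y)) x := by
    simpa using ((hasDerivAt_id x).sub_const y).fun_pow 2
  have hlog : HasDerivAt (fun x => Real.log (1 + x)) (1 / (1 + x)) x := by
    simpa using ((hasDerivAt_id x).const_add 1).log hx.ne'
  exact ((hsq.const_mul (1/2)).fun_add (hlog.const_mul τ)).congr_deriv (by ring)

/-- `(y - 1)/2 ± s` are the roots of the numerator `(x - y)(1 + x) + τ` of the derivative. -/
lemma hasDerivAt_logShrinkObjective_eq_mul_div {y τ s x : ℝ}
    (hs : s^2 = (1 + y)^2/4 - τ) (hx : 0 < 1 + x) :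
    HasDerivAt (logShrinkObjective y τ)
      ((x - ((y - 1)/2 + s)) * (x - ((y - 1)/2 - s)) / (1 + x)) x := by
  refine (hasDerivAt_logShrinkObjective y τ hx).congr_deriv ?_
  field_simp
  linear_combination 4 * hs

lemma min_logShrinkObjective_le {y τ s x : ℝ} (hs0 : 0 ≤ s) (hs : s^2 = (1 + y)^2/4 - τ)
    (hx : 0 ≤ x) :
    min (logShrinkObjective y τ 0) (logShrinkObjective y τ (max 0 ((y - 1)/2 + s)))
      ≤ logShrinkObjective y τ x := by
  have hd : ∀ x ∈ Ioi (0 : ℝ), HasDerivAt (logShrinkObjective y τ)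
      ((x - ((y - 1)/2 + s)) * (x - ((y - 1)/2 - s)) / (1 + x)) x :=
    fun x hx => hasDerivAt_logShrinkObjective_eq_mul_div hs (by linarith [mem_Ioi.1 hx])
  refine min_le_of_hasDerivAt_nonneg_nonpos_nonneg (p := (y - 1)/2 - s)
    (fun x hx => (hasDerivAt_logShrinkObjective y τ (by linarith [mem_Ici.1 hx]))
      |>.continuousAt.continuousWithinAt) hd (fun x hx hpq => ?_) (fun x hx hp hq => ?_) hx
  · rw [mem_Ioi] at hx
    refine div_nonneg ?_ (by linarith)
    rcases hpq with hp | hq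
    · exact mul_nonneg_of_nonpos_of_nonpos (by linarith) (by linarith)
    · exact mul_nonneg (by linarith) (by linarith)
  · rw [mem_Ioi] at hx
    exact div_nonpos_of_nonpos_of_nonneg (mul_nonpos_of_nonpos_of_nonneg (by linarith)
      (by linarith)) (by linarith)

theorem stmt2_general (y τ : ℝ) (h : (1 + y)^2 > 4 * τ)
    (f : ℝ → ℝ) (hf : ∀ x : ℝ, f x = (1/2) * (x - y)^2 + τ * Real.log (1 + x))
    (ξ : ℝ) (hξ : ξ = (y - 1)/2 + Real.sqrt ((1 + y)^2/4 - τ)) :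
    (ξ > 0 → f ξ ≤ y^2/2 → ∀ x : ℝ, 0 ≤ x → f ξ ≤ f x) ∧
    ((ξ ≤ 0 ∨ f ξ > y^2/2) → ∀ x : ℝ, 0 ≤ x → f 0 ≤ f x) := by
  obtain rfl : f = logShrinkObjective y τ := funext hf
  have hmin : ∀ x, 0 ≤ x → min (logShrinkObjective y τ 0) (logShrinkObjective y τ (max 0 ξ))
      ≤ logShrinkObjective y τ x := fun x hx => hξ ▸
    min_logShrinkObjective_le (Real.sqrt_nonneg _) (Real.sq_sqrt (by linarith)) hx
  have hf0 : logShrinkObjective y τ 0 = y^2/2 := by simp [logShrinkObjective]; ring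
  refine ⟨fun hξ0 hfξ x hx => ?_, fun hcase x hx => ?_⟩
  · simpa [max_eq_right hξ0.le, hf0, hfξ] using hmin x hx
  · refine (min_eq_left ?_).symm.trans_le (hmin x hx)
    rcases le_or_gt ξ 0 with hξ0 | hξ0
    · rw [max_eq_left hξ0]
    · rw [max_eq_right hξ0.le, hf0]
      exact (hcase.resolve_left hξ0.not_ge).le

/-- If `(1+y)² > 4τ` and `ξ = (y-1)/2 + √((1+y)²/4 - τ)`: when `ξ > 0` and `f(ξ) ≤ f(0) = y²/2`,
`ξ` is a global minimizer of `f` over `[0, ∞)`; otherwise `0` is a global minimizer. -/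
theorem stmt2 (y τ : ℝ) (hy : 0 ≤ y) (hτ : 0 ≤ τ) (h : (1 + y)^2 > 4 * τ)
    (f : ℝ → ℝ) (hf : ∀ x : ℝ, f x = (1/2) * (x - y)^2 + τ * Real.log (1 + x))
    (ξ : ℝ) (hξ : ξ = (y - 1)/2 + Real.sqrt ((1 + y)^2/4 - τ)) :
    (ξ > 0 → f ξ ≤ y^2/2 → ∀ x : ℝ, 0 ≤ x → f ξ ≤ f x) ∧
    ((ξ ≤ 0 ∨ f ξ > y^2/2) → ∀ x : ℝ, 0 ≤ x → f 0 ≤ f x) :=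
  stmt2_general y τ h f hf ξ hξ
end

section
/- Let y ∈ ℝ^d with y ≠ 0, and let τ ≥ 0. Define g(w) = (1/2)‖y − w‖₂² + τ·log(1 + ‖w‖₂) for w ∈ ℝ^d. Then every global minimizer w* of g over ℝ^d is a nonnegative scalar multiple of y, namely w* = (c/‖y‖₂)·y where c = ‖w*‖₂ ∈ [0, ‖y‖₂] is a global minimizer over [0, ∞) of the scalar function f(x) = (1/2)(x − ‖y‖₂)² + τ·log(1 + x); moreover min_{w ∈ ℝ^d} g(w) = min_{x ≥ 0} f(x). -/
/-!
The ray vector `(x / ‖y‖) • y` has norm `x` and attains `g = f x`, so `min g ≤ min f`.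
Conversely the reverse triangle inequality `|‖y‖ - ‖w‖| ≤ ‖y - w‖` gives `f ‖w‖ ≤ g w`.
At a minimizer `w` both are equalities, and equality in the reverse triangle inequality of a
strictly convex space puts `w` on the ray through `y`. Since `f` is strictly increasing beyond
`‖y‖`, a minimizer cannot have `‖w‖ > ‖y‖`.
-/

open Real Set

section

variable {E : Type*} [NormedAddCommGroup E] [NormedSpace ℝ E]

lemma norm_div_norm_smul_self {y : E} (hy : y ≠ 0) {x : ℝ} (hx : 0 ≤ x) :
    ‖(x / ‖y‖) • y‖ = x := by
  rw [norm_smul, norm_div, norm_norm, div_mul_cancel₀ _ (norm_ne_zero_iff.mpr hy),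
    Real.norm_of_nonneg hx]

lemma norm_sub_div_norm_smul_self {y : E} (hy : y ≠ 0) (x : ℝ) :
    ‖y - (x / ‖y‖) • y‖ = |‖y‖ - x| := by
  have hyn : ‖y‖ ≠ 0 := norm_ne_zero_iff.mpr hy
  calc ‖y - (x / ‖y‖) • y‖ = |1 - x / ‖y‖| * ‖y‖ := by
        rw [← Real.norm_eq_abs, ← norm_smul, sub_smul, one_smul]
    _ = |‖y‖ - x| := by
        rw [← abs_norm y, ← abs_mul, sub_mul, abs_norm, div_mul_cancel₀ _ hyn, one_mul]

lemma eq_div_norm_smul_of_norm_sub_eq [StrictConvexSpace ℝ E] {y w : E} (hy : y ≠ 0)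
    (h : ‖y - w‖ = |‖y‖ - ‖w‖|) : w = (‖w‖ / ‖y‖) • y := by
  have hyw : ‖y‖ • w = ‖w‖ • y := sameRay_iff_norm_smul_eq.mp (sameRay_iff_norm_sub.mpr h)
  rw [div_eq_inv_mul, mul_smul, ← hyw, inv_smul_smul₀ (norm_ne_zero_iff.mpr hy)]

end

lemma strictMonoOn_half_sq_sub_add_mul_log {b τ : ℝ} (hb : 0 ≤ b) (hτ : 0 ≤ τ) :
    StrictMonoOn (fun x => 1 / 2 * (x - b) ^ 2 + τ * log (1 + x)) (Ici b) := by
  intro a ha x hx hax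
  simp only [mem_Ici] at ha hx
  have hsq : (a - b) ^ 2 < (x - b) ^ 2 := by gcongr
  have hlog : log (1 + a) ≤ log (1 + x) := log_le_log (by linarith) (by linarith)
  exact add_lt_add_of_lt_of_le (by linarith) (mul_le_mul_of_nonneg_left hlog hτ)

/-- Reduction of the vector `ℓ_{2,log}`-shrinkage problem to a scalar problem: every global
minimizer `w` of `g(w) = (1/2)‖y-w‖² + τ log(1+‖w‖)` is a nonnegative multiple of `y`,
`w = (‖w‖/‖y‖) • y` with `‖w‖ ∈ [0, ‖y‖]`, `‖w‖` globally minimizes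
`f(x) = (1/2)(x-‖y‖)² + τ log(1+x)` over `[0,∞)`, and the two minimum values agree. -/
theorem stmt4 (d : ℕ) (y : EuclideanSpace ℝ (Fin d)) (hy : y ≠ 0) (τ : ℝ) (hτ : 0 ≤ τ)
    (g : EuclideanSpace ℝ (Fin d) → ℝ)
    (hg : ∀ w, g w = (1/2) * ‖y - w‖^2 + τ * Real.log (1 + ‖w‖))
    (f : ℝ → ℝ) (hf : ∀ x : ℝ, f x = (1/2) * (x - ‖y‖)^2 + τ * Real.log (1 + x))
    (w : EuclideanSpace ℝ (Fin d)) (hw : ∀ w', g w ≤ g w') :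
    w = (‖w‖ / ‖y‖) • y ∧ ‖w‖ ≤ ‖y‖ ∧
    (∀ x : ℝ, 0 ≤ x → f ‖w‖ ≤ f x) ∧ g w = f ‖w‖ := by
  have hg_ray : ∀ x, 0 ≤ x → g ((x / ‖y‖) • y) = f x := fun x hx => by
    rw [hg, hf, norm_div_norm_smul_self hy hx, norm_sub_div_norm_smul_self hy, sq_abs,
      ← neg_sub, neg_sq]
  have hg_ge : f ‖w‖ ≤ g w := by
    rw [hf, hg, ← sq_abs (‖w‖ - ‖y‖), abs_sub_comm]
    gcongr
    exact abs_norm_sub_norm_le y w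
  have hgw : g w = f ‖w‖ := le_antisymm (hg_ray ‖w‖ (norm_nonneg w) ▸ hw _) hg_ge
  have hmin : ∀ x, 0 ≤ x → f ‖w‖ ≤ f x := fun x hx => hgw ▸ hg_ray x hx ▸ hw _
  have hdist : ‖y - w‖ = |‖y‖ - ‖w‖| := by
    rw [hf, hg, add_left_inj, mul_right_inj' one_half_pos.ne', ← sq_abs (‖w‖ - ‖y‖),
      abs_sub_comm] at hgw
    exact (pow_left_inj₀ (norm_nonneg _) (abs_nonneg _) two_ne_zero).mp hgw
  refine ⟨eq_div_norm_smul_of_norm_sub_eq hy hdist, ?_, hmin, hgw⟩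
  by_contra! hwy
  have hf_mono : StrictMonoOn f (Ici ‖y‖) :=
    funext hf ▸ strictMonoOn_half_sq_sub_add_mul_log (norm_nonneg y) hτ
  exact (hmin ‖y‖ (norm_nonneg y)).not_gt (hf_mono self_mem_Ici (mem_Ici.mpr hwy.le) hwy)
end

section
/- (ℓ_{2,log}-shrinkage operator) Let Y ∈ ℝ^{d×n} with columns y₁, …, y_n and let τ ≥ 0. For each i, set f_i(x) = (1/2)(x − ‖y_i‖₂)² + τ·log(1 + x) and, when (1 + ‖y_i‖₂)² ≥ 4τ, set ξ_i = (‖y_i‖₂ − 1)/2 + √((1 + ‖y_i‖₂)²/4 − τ). Define W* ∈ ℝ^{d×n} column-wise by w*_i = (ξ_i/‖y_i‖₂)·y_i if (1 + ‖y_i‖₂)² > 4τ, ξ_i > 0, and f_i(ξ_i) ≤ ‖y_i‖₂²/2, and w*_i = 0 otherwise. Then W* is a global minimizer over ℝ^{d×n} of the problem min_W (1/2)‖Y − W‖_F² + τ·‖W‖_{2,log}. -/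
open Finset Real

/-! The objective is a sum over columns. For a column `y` with `a = ‖y‖`, the reverse triangle
inequality bounds the cost of any `w` from below by `F(‖w‖)`, where
`F x = (x - a)² / 2 + τ log (1 + x)`, with equality when `w` is a nonnegative multiple of `y`.
On `x > -1`, `F'` has the sign of `(x - a)(1 + x) + τ = (x - r)(x - ξ)` with `r = a - 1 - ξ ≤ ξ`,
so on `[0, ∞)` the function `F` is minimised at `0` or at `ξ`, and `W*` picks the better of the two.
-/

noncomputable def scalarCost (a τ x : ℝ) : ℝ := 1 / 2 * (x - a) ^ 2 + τ * log (1 + x)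

noncomputable def shrinkRoot (a τ : ℝ) : ℝ := (a - 1) / 2 + √((1 + a) ^ 2 / 4 - τ)

section scalarCost

variable {a τ : ℝ}

lemma hasDerivAt_scalarCost {x : ℝ} (hx : -1 < x) :
    HasDerivAt (scalarCost a τ) (((x - a) * (1 + x) + τ) / (1 + x)) x := by
  have h1 : 1 + x ≠ 0 := by linarith
  have hlog : HasDerivAt (fun y => log (1 + y)) (1 / (1 + x)) x := by
    simpa [one_div, Function.comp_def] using
      (hasDerivAt_log h1).comp x ((hasDerivAt_id x).const_add 1)
  have hsq : HasDerivAt (fun y => 1 / 2 * (y - a) ^ 2) (x - a) x :=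
    ((((hasDerivAt_id x).sub_const a).pow 2).const_mul (1 / 2 : ℝ)).congr_deriv (by simp)
  exact (hsq.add (hlog.const_mul τ)).congr_deriv (by field_simp)

lemma monotoneOn_scalarCost {s : Set ℝ} (hconv : Convex ℝ s) (hs : s ⊆ Set.Ioi (-1))
    (h : ∀ y ∈ s, 0 ≤ (y - a) * (1 + y) + τ) : MonotoneOn (scalarCost a τ) s :=
  monotoneOn_of_hasDerivWithinAt_nonneg hconv
    (fun x hx => (hasDerivAt_scalarCost (hs hx)).continuousAt.continuousWithinAt)
    (fun x hx => (hasDerivAt_scalarCost (hs (interior_subset hx))).hasDerivWithinAt)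
    fun y hy => div_nonneg (h y (interior_subset hy))
      (by have : -1 < y := hs (interior_subset hy); linarith)

lemma antitoneOn_scalarCost {s : Set ℝ} (hconv : Convex ℝ s) (hs : s ⊆ Set.Ioi (-1))
    (h : ∀ y ∈ s, (y - a) * (1 + y) + τ ≤ 0) : AntitoneOn (scalarCost a τ) s :=
  antitoneOn_of_hasDerivWithinAt_nonpos hconv
    (fun x hx => (hasDerivAt_scalarCost (hs hx)).continuousAt.continuousWithinAt)
    (fun x hx => (hasDerivAt_scalarCost (hs (interior_subset hx))).hasDerivWithinAt)
    fun y hy => div_nonpos_of_nonpos_of_nonneg (h y (interior_subset hy))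
      (by have : -1 < y := hs (interior_subset hy); linarith)

lemma scalarCost_zero : scalarCost a τ 0 = a ^ 2 / 2 := by
  simp [scalarCost]; ring

lemma shrinkRoot_le_self (hτ : 0 ≤ τ) (ha : 0 ≤ a) : shrinkRoot a τ ≤ a := by
  have : √((1 + a) ^ 2 / 4 - τ) ≤ (1 + a) / 2 :=
    Real.sqrt_le_iff.mpr ⟨by linarith, by linarith⟩
  unfold shrinkRoot; linarith

lemma sub_mul_one_add_add_eq_mul (hD : 4 * τ ≤ (1 + a) ^ 2) (y : ℝ) :
    (y - a) * (1 + y) + τ = (y - (a - 1 - shrinkRoot a τ)) * (y - shrinkRoot a τ) := by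
  have hs : √((1 + a) ^ 2 / 4 - τ) ^ 2 = (1 + a) ^ 2 / 4 - τ := Real.sq_sqrt (by linarith)
  unfold shrinkRoot
  linear_combination hs

lemma sub_shrinkRoot_le_shrinkRoot : a - 1 - shrinkRoot a τ ≤ shrinkRoot a τ := by
  unfold shrinkRoot; linarith [Real.sqrt_nonneg ((1 + a) ^ 2 / 4 - τ)]

lemma scalarCost_zero_le (h : (1 + a) ^ 2 ≤ 4 * τ ∨ shrinkRoot a τ ≤ 0) {x : ℝ} (hx : 0 ≤ x) :
    scalarCost a τ 0 ≤ scalarCost a τ x := by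
  refine monotoneOn_scalarCost (convex_Ici 0) (fun y hy => by simp at hy ⊢; linarith) ?_
    Set.self_mem_Ici hx hx
  intro y (hy : 0 ≤ y)
  rcases le_or_gt ((1 + a) ^ 2) (4 * τ) with hD | hD
  · nlinarith [sq_nonneg (y - (a - 1) / 2)]
  · have hξ : shrinkRoot a τ ≤ 0 := h.resolve_left hD.not_ge
    rw [sub_mul_one_add_add_eq_mul hD.le]
    exact mul_nonneg (by linarith [sub_shrinkRoot_le_shrinkRoot (a := a) (τ := τ)]) (by linarith)

lemma min_scalarCost_zero_shrinkRoot_le (hD : 4 * τ ≤ (1 + a) ^ 2) (hξ : 0 < shrinkRoot a τ)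
    {x : ℝ} (hx : 0 ≤ x) :
    min (scalarCost a τ 0) (scalarCost a τ (shrinkRoot a τ)) ≤ scalarCost a τ x := by
  have hfac := sub_mul_one_add_add_eq_mul hD
  have hr := sub_shrinkRoot_le_shrinkRoot (a := a) (τ := τ)
  set ξ := shrinkRoot a τ
  set r := a - 1 - ξ
  rcases le_total ξ x with hξx | hxξ
  · refine (min_le_right _ _).trans <| monotoneOn_scalarCost (convex_Ici ξ)
      (fun y (hy : ξ ≤ y) => by simp only [Set.mem_Ioi]; linarith) (fun y (hy : ξ ≤ y) => ?_)
      Set.self_mem_Ici hξx hξx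
    rw [hfac]
    exact mul_nonneg (by linarith) (by linarith)
  rcases le_total r x with hrx | hxr
  · refine (min_le_right _ _).trans <| antitoneOn_scalarCost (convex_Icc x ξ)
      (fun y hy => by simp only [Set.mem_Ioi]; linarith [hy.1]) (fun y hy => ?_)
      (Set.left_mem_Icc.mpr hxξ) (Set.right_mem_Icc.mpr hxξ) hxξ
    rw [hfac]
    exact mul_nonpos_of_nonneg_of_nonpos (by linarith [hy.1]) (by linarith [hy.2])
  · refine (min_le_left _ _).trans <| monotoneOn_scalarCost (convex_Icc 0 x)
      (fun y hy => by simp only [Set.mem_Ioi]; linarith [hy.1]) (fun y hy => ?_)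
      (Set.left_mem_Icc.mpr hx) (Set.right_mem_Icc.mpr hx) hx
    rw [hfac]
    exact mul_nonneg_of_nonpos_of_nonpos (by linarith [hy.2]) (by linarith [hy.2])

end scalarCost

def ShrinkActive (a τ : ℝ) : Prop :=
  4 * τ < (1 + a) ^ 2 ∧ 0 < shrinkRoot a τ ∧ scalarCost a τ (shrinkRoot a τ) ≤ a ^ 2 / 2

section proxCost

variable {E : Type*} [NormedAddCommGroup E]

noncomputable def proxCost (τ : ℝ) (y w : E) : ℝ := 1 / 2 * ‖y - w‖ ^ 2 + τ * log (1 + ‖w‖)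

lemma scalarCost_norm_le_proxCost (τ : ℝ) (y w : E) :
    scalarCost ‖y‖ τ ‖w‖ ≤ proxCost τ y w := by
  have h : (‖w‖ - ‖y‖) ^ 2 ≤ ‖y - w‖ ^ 2 := by
    rw [← sq_abs, norm_sub_rev y w]
    exact pow_le_pow_left₀ (abs_nonneg _) (abs_norm_sub_norm_le w y) 2
  unfold scalarCost proxCost
  linarith

lemma proxCost_zero (τ : ℝ) (y : E) : proxCost τ y 0 = scalarCost ‖y‖ τ 0 := by
  simp [proxCost, scalarCost]

variable [NormedSpace ℝ E]

lemma proxCost_div_norm_smul (τ : ℝ) {y : E} (hy : y ≠ 0) {t : ℝ} (ht : 0 ≤ t) :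
    proxCost τ y ((t / ‖y‖) • y) = scalarCost ‖y‖ τ t := by
  have hy' : ‖y‖ ≠ 0 := norm_ne_zero_iff.mpr hy
  have hnorm : ‖(t / ‖y‖) • y‖ = t := by
    rw [norm_smul, Real.norm_of_nonneg (by positivity), div_mul_cancel₀ t hy']
  have hsub : ‖y - (t / ‖y‖) • y‖ ^ 2 = (t - ‖y‖) ^ 2 := by
    rw [show y - (t / ‖y‖) • y = (1 - t / ‖y‖) • y by rw [sub_smul, one_smul], norm_smul,
      mul_pow, Real.norm_eq_abs, sq_abs]
    field_simp
    ring
  rw [proxCost, scalarCost, hnorm, hsub]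

theorem proxCost_le_of_shrinkActive {τ : ℝ} (hτ : 0 ≤ τ) {y w : E}
    (hw_active : ShrinkActive ‖y‖ τ → w = (shrinkRoot ‖y‖ τ / ‖y‖) • y)
    (hw_inactive : ¬ShrinkActive ‖y‖ τ → w = 0) (w' : E) :
    proxCost τ y w ≤ proxCost τ y w' := by
  refine le_trans ?_ (scalarCost_norm_le_proxCost τ y w')
  have hw' := norm_nonneg w'
  by_cases hact : ShrinkActive ‖y‖ τ
  · obtain ⟨hD, hξ, hle⟩ := hact
    have hy : y ≠ 0 :=
      norm_pos_iff.mp (hξ.trans_le (shrinkRoot_le_self hτ (norm_nonneg y)))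
    rw [hw_active ⟨hD, hξ, hle⟩, proxCost_div_norm_smul τ hy hξ.le,
      ← min_eq_right (hle.trans_eq scalarCost_zero.symm)]
    exact min_scalarCost_zero_shrinkRoot_le hD.le hξ hw'
  · rw [hw_inactive hact, proxCost_zero]
    by_cases h : 4 * τ < (1 + ‖y‖) ^ 2 ∧ 0 < shrinkRoot ‖y‖ τ
    · have hlt : scalarCost ‖y‖ τ 0 < scalarCost ‖y‖ τ (shrinkRoot ‖y‖ τ) := by
        rw [scalarCost_zero]
        exact lt_of_not_ge fun hle => hact ⟨h.1, h.2, hle⟩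
      rw [← min_eq_left hlt.le]
      exact min_scalarCost_zero_shrinkRoot_le h.1.le h.2 hw'
    · exact scalarCost_zero_le (by simpa only [not_and_or, not_lt] using h) hw'

end proxCost

section EuclideanSpace

variable {ι : Type*} [Fintype ι]

lemma norm_toLp_two_eq_sqrt (v : ι → ℝ) :
    ‖(WithLp.toLp 2 v : EuclideanSpace ℝ ι)‖ = √(∑ j, v j ^ 2) := by
  simp [EuclideanSpace.norm_eq]

lemma sq_norm_toLp_two (v : ι → ℝ) :
    ‖(WithLp.toLp 2 v : EuclideanSpace ℝ ι)‖ ^ 2 = ∑ j, v j ^ 2 := by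
  simp [EuclideanSpace.norm_sq_eq]

end EuclideanSpace

open Finset in
/-- (`ℓ_{2,log}`-shrinkage operator, Theorem 1.) The matrix `W` defined column-wise by
`wᵢ = (ξᵢ/‖yᵢ‖₂) yᵢ` when `(1+‖yᵢ‖₂)² > 4τ`, `ξᵢ > 0` and `fᵢ(ξᵢ) ≤ ‖yᵢ‖₂²/2`, and `wᵢ = 0`
otherwise, is a global minimizer of `W ↦ (1/2)‖Y-W‖_F² + τ‖W‖_{2,log}`. -/
theorem stmt6 (d n : ℕ) (Y : Matrix (Fin d) (Fin n) ℝ) (τ : ℝ) (hτ : 0 ≤ τ)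
    (ynorm : Fin n → ℝ) (hynorm : ∀ i, ynorm i = Real.sqrt (∑ j, (Y j i)^2))
    (f : Fin n → ℝ → ℝ)
    (hf : ∀ i (x : ℝ), f i x = (1/2) * (x - ynorm i)^2 + τ * Real.log (1 + x))
    (ξ : Fin n → ℝ)
    (hξ : ∀ i, ξ i = (ynorm i - 1)/2 + Real.sqrt ((1 + ynorm i)^2/4 - τ))
    (W : Matrix (Fin d) (Fin n) ℝ)
    (hW1 : ∀ i, (1 + ynorm i)^2 > 4 * τ → ξ i > 0 → f i (ξ i) ≤ (ynorm i)^2/2 →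
      ∀ j, W j i = (ξ i / ynorm i) * Y j i)
    (hW2 : ∀ i, ¬((1 + ynorm i)^2 > 4 * τ ∧ ξ i > 0 ∧ f i (ξ i) ≤ (ynorm i)^2/2) →
      ∀ j, W j i = 0) :
    ∀ W' : Matrix (Fin d) (Fin n) ℝ,
      (1/2) * ∑ i, ∑ j, (Y j i - W j i)^2
        + τ * ∑ i, Real.log (1 + Real.sqrt (∑ j, (W j i)^2)) ≤
      (1/2) * ∑ i, ∑ j, (Y j i - W' j i)^2
        + τ * ∑ i, Real.log (1 + Real.sqrt (∑ j, (W' j i)^2)) := by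
  intro W'
  let col (V : Matrix (Fin d) (Fin n) ℝ) (i : Fin n) : EuclideanSpace ℝ (Fin d) :=
    WithLp.toLp 2 (fun j => V j i)
  have hcost : ∀ V : Matrix (Fin d) (Fin n) ℝ,
      (1/2) * ∑ i, ∑ j, (Y j i - V j i)^2 + τ * ∑ i, log (1 + √(∑ j, (V j i)^2)) =
        ∑ i, proxCost τ (col Y i) (col V i) := fun V => by
    simp only [proxCost, col, ← WithLp.toLp_sub, sq_norm_toLp_two]
    simp only [norm_toLp_two_eq_sqrt, Pi.sub_apply, mul_sum, sum_add_distrib]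
  rw [hcost, hcost]
  refine sum_le_sum fun i _ => ?_
  have hnorm : ‖col Y i‖ = ynorm i := (norm_toLp_two_eq_sqrt _).trans (hynorm i).symm
  have hroot : shrinkRoot (ynorm i) τ = ξ i := (hξ i).symm
  have hactive : ShrinkActive (ynorm i) τ ↔
      (1 + ynorm i)^2 > 4 * τ ∧ ξ i > 0 ∧ f i (ξ i) ≤ (ynorm i)^2/2 := by
    rw [ShrinkActive, hroot, hf]; rfl
  refine proxCost_le_of_shrinkActive hτ (fun hact => ?_) (fun hact => ?_) _ <;>
    rw [hnorm] at hact
  · obtain ⟨hD, hpos, hle⟩ := hactive.mp hact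
    ext j
    simpa [col, hnorm, hroot] using hW1 i hD hpos hle j
  · ext j
    simpa [col] using hW2 i (hactive.not.mp hact) j
end

section
/- Let y ∈ ℝ and τ ≥ 0, and consider the scalar shrinkage problem min_{t ∈ ℝ} (1/2)(t − y)² + τ·log(1 + |t|). Then every global minimizer t* satisfies t* = sign(y)·x* where x* is a global minimizer over [0, ∞) of f(x) = (1/2)(x − |y|)² + τ·log(1 + x); in particular, with ξ = (|y| − 1)/2 + √((1 + |y|)²/4 − τ), the point t* = sign(y)·ξ is a global minimizer when (1 + |y|)² > 4τ, ξ > 0 and f(ξ) ≤ y²/2, and t* = 0 is a global minimizer otherwise. -/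
/-! The objective `g t = (t - y)²/2 + τ log(1 + |t|)` equals `f |t| + (|t| |y| - t y)`, so it is
minimized by giving `t` the sign of `y`, which reduces the problem to `f` on `[0, ∞)`. There
`f' x = ((x - |y|)(1 + x) + τ)/(1 + x)`, and the numerator is a quadratic with roots `ξ` and
`|y| - 1 - ξ`. If it has no root `ξ > 0`, `f` is increasing on `[0, ∞)`; otherwise `f` increases
below the smaller root, decreases up to `ξ` and increases after it, so the minimum of `f` over
`[0, ∞)` is `min (f 0) (f ξ)`, with `f 0 = y²/2`. -/

open Real Set

noncomputable def logShrinkObj (y τ t : ℝ) : ℝ := (1/2) * (t - y)^2 + τ * log (1 + |t|)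

noncomputable def logShrinkRadial (a τ x : ℝ) : ℝ := (1/2) * (x - a)^2 + τ * log (1 + x)

noncomputable def logShrinkRoot (a τ : ℝ) : ℝ := (a - 1)/2 + √((1 + a)^2/4 - τ)

section Radial

variable {a τ : ℝ}

lemma logShrinkRadial_zero : logShrinkRadial a τ 0 = a^2/2 := by
  simp [logShrinkRadial]; ring

lemma hasDerivAt_logShrinkRadial {x : ℝ} (hx : -1 < x) :
    HasDerivAt (logShrinkRadial a τ) (((x - a) * (1 + x) + τ) / (1 + x)) x := by
  have hx' : 1 + x ≠ 0 := by linarith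
  have h : HasDerivAt (logShrinkRadial a τ) _ x :=
    (((hasDerivAt_id x).sub_const a).pow 2).const_mul (1/2 : ℝ) |>.add
      ((((hasDerivAt_id x).const_add 1).log hx').const_mul τ)
  refine h.congr_deriv ?_
  simp only [id, Nat.cast_ofNat]
  field_simp
  ring

lemma monotoneOn_logShrinkRadial {D : Set ℝ} (hD : Convex ℝ D) (hD₁ : D ⊆ Ioi (-1))
    (hq : ∀ x ∈ D, 0 ≤ (x - a) * (1 + x) + τ) : MonotoneOn (logShrinkRadial a τ) D := by
  have hderiv x (hx : x ∈ D) := hasDerivAt_logShrinkRadial (a := a) (τ := τ) (hD₁ hx)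
  refine monotoneOn_of_hasDerivWithinAt_nonneg hD
    (fun x hx => (hderiv x hx).continuousAt.continuousWithinAt)
    (fun x hx => (hderiv x (interior_subset hx)).hasDerivWithinAt) fun x hx => ?_
  have hx₁ : -1 < x := hD₁ (interior_subset hx)
  exact div_nonneg (hq x (interior_subset hx)) (by linarith)

lemma antitoneOn_logShrinkRadial {D : Set ℝ} (hD : Convex ℝ D) (hD₁ : D ⊆ Ioi (-1))
    (hq : ∀ x ∈ D, (x - a) * (1 + x) + τ ≤ 0) : AntitoneOn (logShrinkRadial a τ) D := by
  have hderiv x (hx : x ∈ D) := hasDerivAt_logShrinkRadial (a := a) (τ := τ) (hD₁ hx)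
  refine antitoneOn_of_hasDerivWithinAt_nonpos hD
    (fun x hx => (hderiv x hx).continuousAt.continuousWithinAt)
    (fun x hx => (hderiv x (interior_subset hx)).hasDerivWithinAt) fun x hx => ?_
  have hx₁ : -1 < x := hD₁ (interior_subset hx)
  exact div_nonpos_of_nonpos_of_nonneg (hq x (interior_subset hx)) (by linarith)

lemma logShrinkRoot_factor (hD : 4 * τ ≤ (1 + a)^2) (x : ℝ) :
    (x - a) * (1 + x) + τ = (x - logShrinkRoot a τ) * (x - (a - 1 - logShrinkRoot a τ)) := by
  have hs := Real.sq_sqrt (show 0 ≤ (1 + a)^2/4 - τ by linarith)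
  unfold logShrinkRoot
  linear_combination hs

lemma logShrinkRadial_zero_le (h : (1 + a)^2 ≤ 4 * τ ∨ logShrinkRoot a τ ≤ 0) {x : ℝ}
    (hx : 0 ≤ x) : logShrinkRadial a τ 0 ≤ logShrinkRadial a τ x := by
  refine monotoneOn_logShrinkRadial (convex_Icc 0 x)
    (fun z hz => mem_Ioi.mpr (by linarith [hz.1]))
    (fun z hz => ?_) ⟨le_rfl, hx⟩ ⟨hx, le_rfl⟩ hx
  rcases le_or_gt ((1 + a)^2) (4 * τ) with hD | hD
  · nlinarith [sq_nonneg (z - (a - 1)/2)]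
  · have hξ := h.resolve_left hD.not_ge
    have hη : a - 1 - logShrinkRoot a τ ≤ logShrinkRoot a τ := by
      unfold logShrinkRoot; linarith [Real.sqrt_nonneg ((1 + a)^2/4 - τ)]
    rw [logShrinkRoot_factor hD.le]
    exact mul_nonneg (by linarith [hz.1]) (by linarith [hz.1])

lemma min_le_logShrinkRadial (hD : 4 * τ ≤ (1 + a)^2) (hξ : 0 ≤ logShrinkRoot a τ) {x : ℝ}
    (hx : 0 ≤ x) :
    min (logShrinkRadial a τ 0) (logShrinkRadial a τ (logShrinkRoot a τ)) ≤
      logShrinkRadial a τ x := by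
  set ξ := logShrinkRoot a τ
  have hη : a - 1 - ξ ≤ ξ := by
    simp only [ξ, logShrinkRoot]; linarith [Real.sqrt_nonneg ((1 + a)^2/4 - τ)]
  have hq := logShrinkRoot_factor hD
  have hIcc {c d : ℝ} (hc : 0 ≤ c) : Icc c d ⊆ Ioi (-1) := fun z hz =>
    mem_Ioi.mpr (by linarith [hz.1])
  rcases le_total ξ x with hξx | hxξ
  · refine min_le_of_right_le <| monotoneOn_logShrinkRadial (convex_Icc ξ x) (hIcc hξ)
      (fun z hz => ?_) ⟨le_rfl, hξx⟩ ⟨hξx, le_rfl⟩ hξx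
    rw [hq]; exact mul_nonneg (by linarith [hz.1]) (by linarith [hz.1])
  rcases le_total (a - 1 - ξ) x with hηx | hxη
  · refine min_le_of_right_le <| antitoneOn_logShrinkRadial (convex_Icc x ξ) (hIcc hx)
      (fun z hz => ?_) ⟨le_rfl, hxξ⟩ ⟨hxξ, le_rfl⟩ hxξ
    rw [hq]; exact mul_nonpos_of_nonpos_of_nonneg (by linarith [hz.2]) (by linarith [hz.1])
  · refine min_le_of_left_le <| monotoneOn_logShrinkRadial (convex_Icc 0 x) (hIcc le_rfl)
      (fun z hz => ?_) ⟨le_rfl, hx⟩ ⟨hx, le_rfl⟩ hx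
    rw [hq]; exact mul_nonneg_of_nonpos_of_nonpos (by linarith [hz.2]) (by linarith [hz.2])

lemma isMinOn_logShrinkRoot (hD : (1 + a)^2 > 4 * τ) (hξ : logShrinkRoot a τ > 0)
    (hmin : logShrinkRadial a τ (logShrinkRoot a τ) ≤ a^2/2) :
    IsMinOn (logShrinkRadial a τ) (Ici 0) (logShrinkRoot a τ) := fun x hx => by
  have h := min_le_logShrinkRadial hD.le hξ.le hx
  rwa [min_eq_right (logShrinkRadial_zero (τ := τ) ▸ hmin)] at h

lemma isMinOn_logShrinkRadial_zero
    (h : ¬((1 + a)^2 > 4 * τ ∧ logShrinkRoot a τ > 0 ∧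
      logShrinkRadial a τ (logShrinkRoot a τ) ≤ a^2/2)) :
    IsMinOn (logShrinkRadial a τ) (Ici 0) 0 := fun x hx => by
  by_cases hcrit : (1 + a)^2 > 4 * τ ∧ logShrinkRoot a τ > 0
  · have hlt : logShrinkRadial a τ 0 < logShrinkRadial a τ (logShrinkRoot a τ) := by
      rw [logShrinkRadial_zero]; exact lt_of_not_ge fun hle => h ⟨hcrit.1, hcrit.2, hle⟩
    have h' := min_le_logShrinkRadial hcrit.1.le hcrit.2.le hx
    rwa [min_eq_left hlt.le] at h'
  · rw [not_and_or, not_lt, not_lt] at hcrit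
    exact logShrinkRadial_zero_le hcrit hx

end Radial

section Signed

variable {y τ : ℝ}

lemma logShrinkObj_eq_add (t : ℝ) :
    logShrinkObj y τ t = logShrinkRadial |y| τ |t| + (|t| * |y| - t * y) := by
  unfold logShrinkObj logShrinkRadial
  linear_combination (-1/2 : ℝ) * (sq_abs t + sq_abs y)

lemma logShrinkRadial_abs_le (t : ℝ) : logShrinkRadial |y| τ |t| ≤ logShrinkObj y τ t := by
  rw [logShrinkObj_eq_add, ← abs_mul]
  linarith [le_abs_self (t * y)]

lemma logShrinkObj_sign_mul (hy : y ≠ 0) {x : ℝ} (hx : 0 ≤ x) :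
    logShrinkObj y τ (sign y * x) = logShrinkRadial |y| τ x := by
  rw [logShrinkObj_eq_add]
  rcases hy.lt_or_gt with hy | hy
  · rw [sign_of_neg hy, abs_of_neg hy, abs_mul, abs_neg, abs_one, one_mul, abs_of_nonneg hx]
    ring
  · rw [sign_of_pos hy, abs_of_pos hy, one_mul, abs_of_nonneg hx]
    ring

lemma eq_sign_mul_abs_of_mul_eq (hy : y ≠ 0) {t : ℝ} (h : t * y = |t| * |y|) :
    t = sign y * |t| := by
  rcases hy.lt_or_gt with hy | hy
  · rw [abs_of_neg hy] at h
    rw [sign_of_neg hy]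
    nlinarith
  · rw [abs_of_pos hy] at h
    rw [sign_of_pos hy]
    nlinarith

lemma logShrinkObj_zero : logShrinkObj 0 τ 0 = 0 := by
  simp [logShrinkObj]

lemma half_sq_le_logShrinkObj (hτ : 0 ≤ τ) (t : ℝ) : (t - y)^2/2 ≤ logShrinkObj y τ t := by
  have hlog : 0 ≤ log (1 + |t|) := log_nonneg (by linarith [abs_nonneg t])
  unfold logShrinkObj
  nlinarith [mul_nonneg hτ hlog]

lemma eq_sign_mul_abs_and_isMinOn_of_forall_le (hτ : 0 ≤ τ) {t : ℝ}
    (ht : ∀ t', logShrinkObj y τ t ≤ logShrinkObj y τ t') :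
    t = sign y * |t| ∧ IsMinOn (logShrinkRadial |y| τ) (Ici 0) |t| := by
  rcases eq_or_ne y 0 with rfl | hy
  · have ht0 : t = 0 := by
      have h := (half_sq_le_logShrinkObj hτ t).trans (ht 0)
      rw [logShrinkObj_zero] at h
      nlinarith [sq_nonneg t]
    subst ht0
    refine ⟨by simp, fun x hx => ?_⟩
    have h := ht x
    rw [logShrinkObj_eq_add, logShrinkObj_eq_add] at h
    simpa [abs_of_nonneg (mem_Ici.mp hx)] using h
  · have hmin : IsMinOn (logShrinkRadial |y| τ) (Ici 0) |t| := fun x hx => calc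
      logShrinkRadial |y| τ |t| ≤ logShrinkObj y τ t := logShrinkRadial_abs_le t
      _ ≤ logShrinkObj y τ (sign y * x) := ht _
      _ = logShrinkRadial |y| τ x := logShrinkObj_sign_mul hy hx
    have heq : logShrinkObj y τ t = logShrinkRadial |y| τ |t| :=
      le_antisymm ((ht _).trans (logShrinkObj_sign_mul hy (abs_nonneg t)).le)
        (logShrinkRadial_abs_le t)
    rw [logShrinkObj_eq_add] at heq
    exact ⟨eq_sign_mul_abs_of_mul_eq hy (by linarith), hmin⟩

lemma logShrinkObj_sign_mul_le (hτ : 0 ≤ τ) {x : ℝ} (hx₀ : 0 ≤ x)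
    (hx : IsMinOn (logShrinkRadial |y| τ) (Ici 0) x) (t : ℝ) :
    logShrinkObj y τ (sign y * x) ≤ logShrinkObj y τ t := by
  rcases eq_or_ne y 0 with rfl | hy
  · rw [sign_zero, zero_mul, logShrinkObj_zero]
    exact (by positivity : (0:ℝ) ≤ (t - 0)^2/2).trans (half_sq_le_logShrinkObj hτ t)
  · calc logShrinkObj y τ (sign y * x)
        = logShrinkRadial |y| τ x := logShrinkObj_sign_mul hy hx₀
      _ ≤ logShrinkRadial |y| τ |t| := hx (abs_nonneg t)
      _ ≤ logShrinkObj y τ t := logShrinkRadial_abs_le t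

end Signed

/-- The scalar (`d = 1`) instance of the `ℓ_{2,log}`-shrinkage: every global minimizer `t` of
`g(t) = (1/2)(t-y)² + τ log(1+|t|)` is `sign(y)` times a global minimizer of
`f(x) = (1/2)(x-|y|)² + τ log(1+x)` over `[0,∞)`; with
`ξ = (|y|-1)/2 + √((1+|y|)²/4 - τ)`, the point `sign(y)·ξ` is a global minimizer when
`(1+|y|)² > 4τ`, `ξ > 0` and `f(ξ) ≤ y²/2`, and `0` is a global minimizer otherwise. -/
theorem stmt11 (y τ : ℝ) (hτ : 0 ≤ τ)
    (g : ℝ → ℝ) (hg : ∀ t : ℝ, g t = (1/2) * (t - y)^2 + τ * Real.log (1 + |t|))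
    (f : ℝ → ℝ) (hf : ∀ x : ℝ, f x = (1/2) * (x - |y|)^2 + τ * Real.log (1 + x))
    (ξ : ℝ) (hξ : ξ = (|y| - 1)/2 + Real.sqrt ((1 + |y|)^2/4 - τ)) :
    (∀ t : ℝ, (∀ t', g t ≤ g t') →
      t = Real.sign y * |t| ∧ ∀ x : ℝ, 0 ≤ x → f |t| ≤ f x) ∧
    ((1 + |y|)^2 > 4 * τ ∧ ξ > 0 ∧ f ξ ≤ y^2/2 →
      ∀ t : ℝ, g (Real.sign y * ξ) ≤ g t) ∧
    (¬((1 + |y|)^2 > 4 * τ ∧ ξ > 0 ∧ f ξ ≤ y^2/2) →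
      ∀ t : ℝ, g 0 ≤ g t) := by
  obtain rfl : g = logShrinkObj y τ := funext hg
  obtain rfl : f = logShrinkRadial |y| τ := funext hf
  obtain rfl : ξ = logShrinkRoot |y| τ := hξ
  rw [← sq_abs y]
  refine ⟨fun t ht => ?_, fun h => ?_, fun h => ?_⟩
  · obtain ⟨hsign, hmin⟩ := eq_sign_mul_abs_and_isMinOn_of_forall_le hτ ht
    exact ⟨hsign, fun x hx => hmin hx⟩
  · exact logShrinkObj_sign_mul_le hτ h.2.1.le (isMinOn_logShrinkRoot h.1 h.2.1 h.2.2)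
  · simpa using logShrinkObj_sign_mul_le hτ le_rfl (isMinOn_logShrinkRadial_zero h)
end
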